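/- arXiv:0911.4725 — 3 statements merged into one kernel-verified Lean document; each statement's English description precedes it below -/
import Mathlib

section
/- For every smooth function f : ℝᵐ \ {0} → ℝ, all indices i, j ∈ {1,…,m} and every x ≠ 0 one has X_i(D_j f)(x) + D_i(X_j f)(x) = X_j(D_i f)(x) + D_j(X_i f)(x). (This symmetry is what makes the anticommutator {x_a, D} a purely scalar operator, i.e. its bivector part vanishes.) -/
open Real

/-- `i`-th partial derivative of a scalar function on Euclidean space. -/
noncomputable def pd {m : ℕ} (i : Fin m) (f : EuclideanSpace ℝ (Fin m) → ℝ)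
    (x : EuclideanSpace ℝ (Fin m)) : ℝ :=
  fderiv ℝ f x (EuclideanSpace.single i 1)

/-- Euler operator `E f (x) = ∑ j, x j * ∂_j f (x)`. -/
noncomputable def euler {m : ℕ} (f : EuclideanSpace ℝ (Fin m) → ℝ)
    (x : EuclideanSpace ℝ (Fin m)) : ℝ :=
  ∑ j, x j * pd j f x

/-- Components `D_i` of the deformed Dirac operator (trivial multiplicity `k = 0`). -/
noncomputable def Dop {m : ℕ} (a b c : ℝ) (i : Fin m)
    (f : EuclideanSpace ℝ (Fin m) → ℝ) (x : EuclideanSpace ℝ (Fin m)) : ℝ :=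
  ‖x‖ ^ (1 - a / 2) * pd i f x + b * ‖x‖ ^ (-(a / 2) - 1) * x i * f x
    + c * ‖x‖ ^ (-(a / 2) - 1) * x i * euler f x

/-- Multiplication operators `X_i f (x) = r^{a/2-1} x_i f(x)`. -/
noncomputable def Xop {m : ℕ} (a : ℝ) (i : Fin m)
    (f : EuclideanSpace ℝ (Fin m) → ℝ) (x : EuclideanSpace ℝ (Fin m)) : ℝ :=
  ‖x‖ ^ (a / 2 - 1) * x i * f x


private lemma hasFDerivAt_rpow_norm' {m : ℕ} (p : ℝ) {x : EuclideanSpace ℝ (Fin m)} (hx : x ≠ 0) :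
    HasFDerivAt (fun y : EuclideanSpace ℝ (Fin m) => ‖y‖ ^ p)
      ((p * ‖x‖ ^ (p - 2)) • innerSL ℝ x) x := by
  have hr : (0:ℝ) < ‖x‖ := norm_pos_iff.mpr hx
  have h2 : HasFDerivAt (fun y : EuclideanSpace ℝ (Fin m) => (‖y‖ ^ 2 : ℝ))
      ((2:ℕ) • innerSL ℝ x) x := (hasStrictFDerivAt_norm_sq x).hasFDerivAt
  have hpow : HasDerivAt (fun t : ℝ => t ^ (p / 2))
      ((p / 2) * (‖x‖ ^ 2) ^ (p / 2 - 1)) (‖x‖ ^ 2) :=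
    Real.hasDerivAt_rpow_const (Or.inl (by positivity))
  have h := hpow.comp_hasFDerivAt x h2
  have hbase : ((‖x‖ ^ 2 : ℝ)) ^ (p / 2 - 1) = ‖x‖ ^ (p - 2) := by
    rw [← Real.rpow_natCast ‖x‖ 2, ← Real.rpow_mul (norm_nonneg x)]
    congr 1; push_cast; ring
  have hfun : (fun y : EuclideanSpace ℝ (Fin m) => ((‖y‖ ^ 2 : ℝ)) ^ (p / 2))
      = fun y : EuclideanSpace ℝ (Fin m) => ‖y‖ ^ p := by
    funext y
    rw [← Real.rpow_natCast ‖y‖ 2, ← Real.rpow_mul (norm_nonneg y)]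
    congr 1; push_cast; ring
  have hder : ((p / 2) * (‖x‖ ^ 2) ^ (p / 2 - 1)) • ((2:ℕ) • innerSL ℝ x)
      = (p * ‖x‖ ^ (p - 2)) • innerSL ℝ x := by
    ext v
    simp [hbase]
    ring
  rw [← hfun, ← hder]
  exact h

private lemma pd_Xop {m : ℕ} (a : ℝ) (j : Fin m) (f : EuclideanSpace ℝ (Fin m) → ℝ)
    {x : EuclideanSpace ℝ (Fin m)} (hx : x ≠ 0) (hfd : DifferentiableAt ℝ f x) (i : Fin m) :
    pd i (Xop a j f) x =
      (a / 2 - 1) * ‖x‖ ^ (a / 2 - 3) * x i * x j * f x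
        + (if i = j then ‖x‖ ^ (a / 2 - 1) * f x else 0)
        + ‖x‖ ^ (a / 2 - 1) * x j * pd i f x := by
  have h1 := hasFDerivAt_rpow_norm' (a / 2 - 1) hx
  have h2 : HasFDerivAt (fun y : EuclideanSpace ℝ (Fin m) => y j)
      (innerSL ℝ (EuclideanSpace.single j 1)) x := by
    have heq : (fun y : EuclideanSpace ℝ (Fin m) => (inner ℝ (EuclideanSpace.single j (1:ℝ)) y : ℝ))
        = fun y : EuclideanSpace ℝ (Fin m) => y j := by
      funext y; simp [EuclideanSpace.inner_single_left]
    have := (innerSL ℝ (EuclideanSpace.single j (1:ℝ))).hasFDerivAt (x := x)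
    rw [show (⇑(innerSL ℝ (EuclideanSpace.single j (1:ℝ))))
        = fun y : EuclideanSpace ℝ (Fin m) => y j from heq] at this
    exact this
  have h3 := hfd.hasFDerivAt
  have h := (h1.mul h2).mul h3
  have hX : Xop a j f = fun y : EuclideanSpace ℝ (Fin m) => (‖y‖ ^ (a/2-1)) * y j * f y := rfl
  rw [pd, hX, show (fun y : EuclideanSpace ℝ (Fin m) => (‖y‖ ^ (a/2-1)) * y j * f y) = ((fun y : EuclideanSpace ℝ (Fin m) => ‖y‖ ^ (a/2-1)) * fun y => y j) * f from rfl, h.fderiv]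
  simp only [ContinuousLinearMap.add_apply, ContinuousLinearMap.smul_apply, smul_eq_mul, Pi.mul_apply,
    innerSL_apply_apply, EuclideanSpace.inner_single_right, EuclideanSpace.inner_single_left,
    EuclideanSpace.single_apply]
  rw [show (a/2-1) - 2 = a/2-3 by ring]
  rcases eq_or_ne i j with h | h
  · subst h; simp [pd]; ring
  · simp [h, Ne.symm h, pd]; ring

private lemma euler_Xop {m : ℕ} (a : ℝ) (j : Fin m) (f : EuclideanSpace ℝ (Fin m) → ℝ)
    {x : EuclideanSpace ℝ (Fin m)} (hx : x ≠ 0) (hfd : DifferentiableAt ℝ f x) :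
    euler (Xop a j f) x =
      (a / 2) * ‖x‖ ^ (a / 2 - 1) * x j * f x + ‖x‖ ^ (a / 2 - 1) * x j * euler f x := by
  have hr : (0:ℝ) < ‖x‖ := norm_pos_iff.mpr hx
  have hnorm : ∑ k, x k * x k = ‖x‖ ^ 2 := by
    rw [EuclideanSpace.norm_eq, Real.sq_sqrt (Finset.sum_nonneg fun i _ => sq_nonneg _)]
    simp [Real.norm_eq_abs, sq]
  have hpow : ‖x‖ ^ (a / 2 - 3) * ‖x‖ ^ (2:ℕ) = ‖x‖ ^ (a / 2 - 1) := by
    rw [← Real.rpow_natCast ‖x‖ 2, ← Real.rpow_add hr]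
    congr 1; push_cast; ring
  have step1 : euler (Xop a j f) x
      = ∑ k, ((x k * x k) * ((a / 2 - 1) * ‖x‖ ^ (a / 2 - 3) * x j * f x)
          + (if k = j then x k * (‖x‖ ^ (a / 2 - 1) * f x) else 0)
          + (‖x‖ ^ (a / 2 - 1) * x j) * (x k * pd k f x)) := by
    unfold euler
    refine Finset.sum_congr rfl fun k _ => ?_
    rw [pd_Xop a j f hx hfd k]
    rcases eq_or_ne k j with h | h
    · subst h; simp; ring
    · simp [h]; ring
  rw [step1, Finset.sum_add_distrib, Finset.sum_add_distrib, ← Finset.sum_mul,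
    ← Finset.mul_sum, hnorm]
  simp only [Finset.sum_ite_eq', Finset.mem_univ, if_true]
  have heuler : (∑ k, x k * pd k f x) = euler f x := rfl
  rw [heuler]
  linear_combination ((a / 2 - 1) * x j * f x) * hpow


theorem stmt_1 (m : ℕ) (hm : 1 ≤ m) (a b c : ℝ) (hc : c ≠ -1)
    (f : EuclideanSpace ℝ (Fin m) → ℝ)
    (hf : ContDiffOn ℝ (⊤ : ℕ∞) f {(0 : EuclideanSpace ℝ (Fin m))}ᶜ)
    (i j : Fin m) (x : EuclideanSpace ℝ (Fin m)) (hx : x ≠ 0) :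
    Xop a i (Dop a b c j f) x + Dop a b c i (Xop a j f) x
      = Xop a j (Dop a b c i f) x + Dop a b c j (Xop a i f) x := by
  have hfd : DifferentiableAt ℝ f x :=
    (hf.contDiffAt (isOpen_compl_singleton.mem_nhds (by simpa using hx))).differentiableAt (by simp)
  have hij : (if i = j then ‖x‖ ^ (a / 2 - 1) * f x else 0)
      = (if j = i then ‖x‖ ^ (a / 2 - 1) * f x else 0) := by simp [eq_comm]
  unfold Dop
  rw [pd_Xop a j f hx hfd i, pd_Xop a i f hx hfd j, euler_Xop a j f hx hfd,
    euler_Xop a i f hx hfd, hij]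
  unfold Xop
  ring
end

section
/- For every smooth function f : ℝᵐ \ {0} → ℝ, all indices i, j and every x ≠ 0 one has D_i(D_j f)(x) − D_j(D_i f)(x) = (l + c·l − c) ‖x‖^{−a} ( x_i ∂_j f(x) − x_j ∂_i f(x) ), where l = 1 − a/2. In particular, if a ≠ 0 and c = 2/a − 1 then the operators D_1,…,D_m pairwise commute on smooth functions on ℝᵐ \ {0}. -/
open Real

section Aux

variable {m : ℕ} {f g h : EuclideanSpace ℝ (Fin m) → ℝ} {x : EuclideanSpace ℝ (Fin m)}

lemma pd_add (hg : DifferentiableAt ℝ g x) (hh : DifferentiableAt ℝ h x) (i : Fin m) :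
    pd i (fun y => g y + h y) x = pd i g x + pd i h x := by
  unfold pd; rw [fderiv_fun_add hg hh]; simp

lemma pd_const_mul (hg : DifferentiableAt ℝ g x) (k : ℝ) (i : Fin m) :
    pd i (fun y => k * g y) x = k * pd i g x := by
  unfold pd; rw [fderiv_const_mul hg]; simp

lemma pd_mul (hg : DifferentiableAt ℝ g x) (hh : DifferentiableAt ℝ h x) (i : Fin m) :
    pd i (fun y => g y * h y) x = pd i g x * h x + g x * pd i h x := by
  unfold pd; rw [fderiv_fun_mul hg hh]; simp; ring

lemma pd_sum {A : Fin m → EuclideanSpace ℝ (Fin m) → ℝ}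
    (hA : ∀ j, DifferentiableAt ℝ (A j) x) (i : Fin m) :
    pd i (fun y => ∑ j, A j y) x = ∑ j, pd i (A j) x := by
  unfold pd; rw [fderiv_fun_sum (fun j _ => hA j)]; simp

lemma pd_proj (i j : Fin m) (x : EuclideanSpace ℝ (Fin m)) :
    pd i (fun y => y j) x = if j = i then (1:ℝ) else 0 := by
  unfold pd
  rw [show (fun y : EuclideanSpace ℝ (Fin m) => y j) = ⇑(EuclideanSpace.proj (𝕜 := ℝ) j) from rfl,
    ContinuousLinearMap.fderiv]
  simp [EuclideanSpace.proj]

lemma diff_proj (j : Fin m) (x : EuclideanSpace ℝ (Fin m)) :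
    DifferentiableAt ℝ (fun y : EuclideanSpace ℝ (Fin m) => y j) x :=
  (EuclideanSpace.proj (𝕜 := ℝ) j).differentiableAt

lemma diff_rpow (s : ℝ) (hx : x ≠ 0) :
    DifferentiableAt ℝ (fun y : EuclideanSpace ℝ (Fin m) => ‖y‖ ^ s) x := by
  have hn : ‖x‖ ≠ 0 := norm_ne_zero_iff.2 hx
  exact (((contDiffAt_norm ℝ hx).rpow_const_of_ne hn :
    ContDiffAt ℝ 1 (fun y : EuclideanSpace ℝ (Fin m) => ‖y‖ ^ s) x)).differentiableAt (by simp)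

lemma pd_rpow (s : ℝ) (hx : x ≠ 0) (i : Fin m) :
    pd i (fun y : EuclideanSpace ℝ (Fin m) => ‖y‖ ^ s) x = s * ‖x‖ ^ (s - 2) * x i := by
  have hn : ‖x‖ ≠ 0 := norm_ne_zero_iff.2 hx
  have h2 : (‖x‖ ^ 2 : ℝ) ≠ 0 := pow_ne_zero _ hn
  have hD : HasFDerivAt (fun y : EuclideanSpace ℝ (Fin m) => (‖y‖ ^ 2 : ℝ) ^ (s/2))
      (((s/2) * (‖x‖^2 : ℝ) ^ (s/2 - 1)) • (2 • (innerSL ℝ x))) x :=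
    (hasStrictFDerivAt_norm_sq x).hasFDerivAt.rpow_const (Or.inl h2)
  have heq : (fun y : EuclideanSpace ℝ (Fin m) => ‖y‖ ^ s)
      = fun y : EuclideanSpace ℝ (Fin m) => (‖y‖ ^ 2 : ℝ) ^ (s/2) := by
    funext y
    rw [← Real.rpow_natCast ‖y‖ 2, ← Real.rpow_mul (norm_nonneg y)]
    congr 1; push_cast; ring
  rw [heq]
  unfold pd
  rw [hD.fderiv]
  have hpow : ((‖x‖^2 : ℝ)) ^ (s/2 - 1) = ‖x‖ ^ (s - 2) := by
    rw [← Real.rpow_natCast ‖x‖ 2, ← Real.rpow_mul (norm_nonneg x)]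
    congr 1; push_cast; ring
  simp [EuclideanSpace.inner_single_right, hpow, real_inner_comm]
  ring

lemma pd_rpow_mul (s : ℝ) (hx : x ≠ 0) (hg : DifferentiableAt ℝ g x) (i : Fin m) :
    pd i (fun y => ‖y‖ ^ s * g y) x
      = s * ‖x‖ ^ (s - 2) * x i * g x + ‖x‖ ^ s * pd i g x := by
  rw [pd_mul (diff_rpow s hx) hg, pd_rpow s hx]

lemma pd_proj_mul (j : Fin m) (hg : DifferentiableAt ℝ g x) (i : Fin m) :
    pd i (fun y => y j * g y) x
      = (if j = i then (1:ℝ) else 0) * g x + x j * pd i g x := by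
  rw [pd_mul (diff_proj j x) hg, pd_proj]

lemma contDiffAt_pd (hfC : ∀ n : ℕ, ContDiffAt ℝ n f x) (n : ℕ) (k : Fin m) :
    ContDiffAt ℝ n (pd k f) x := by
  have h1 : ContDiffAt ℝ n (fderiv ℝ f) x :=
    (hfC (n+1)).fderiv_right (by exact_mod_cast le_rfl)
  exact h1.clm_apply contDiffAt_const

lemma diff_pd (hfC : ∀ n : ℕ, ContDiffAt ℝ n f x) (k : Fin m) :
    DifferentiableAt ℝ (pd k f) x :=
  (contDiffAt_pd hfC 1 k).differentiableAt (by simp)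

lemma diff_f (hfC : ∀ n : ℕ, ContDiffAt ℝ n f x) : DifferentiableAt ℝ f x :=
  (hfC 1).differentiableAt (by simp)

lemma contDiffAt_euler (hfC : ∀ n : ℕ, ContDiffAt ℝ n f x) (n : ℕ) :
    ContDiffAt ℝ n (euler f) x := by
  have hterm : ∀ j : Fin m, ContDiffAt ℝ n (fun y => y j * pd j f y) x := fun j =>
    (((EuclideanSpace.proj (𝕜 := ℝ) j).contDiff.contDiffAt :
      ContDiffAt ℝ n (fun y : EuclideanSpace ℝ (Fin m) => y j) x)).mul (contDiffAt_pd hfC n j)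
  exact ContDiffAt.sum (fun j _ => hterm j)

lemma diff_euler (hfC : ∀ n : ℕ, ContDiffAt ℝ n f x) : DifferentiableAt ℝ (euler f) x :=
  (contDiffAt_euler hfC 1).differentiableAt (by simp)

lemma pd_symm (hfC : ∀ n : ℕ, ContDiffAt ℝ n f x) (i j : Fin m) :
    pd i (pd j f) x = pd j (pd i f) x := by
  have hsymm : IsSymmSndFDerivAt ℝ f x :=
    (hfC 2).isSymmSndFDerivAt (by simp)
  have hd : DifferentiableAt ℝ (fderiv ℝ f) x :=
    ((hfC 2).fderiv_right (by exact_mod_cast le_rfl :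
        (1:WithTop ℕ∞) + 1 ≤ ((2:ℕ):WithTop ℕ∞))).differentiableAt
      (by simp)
  have key : ∀ v w : EuclideanSpace ℝ (Fin m),
      fderiv ℝ (fun y => fderiv ℝ f y w) x v = fderiv ℝ (fderiv ℝ f) x v w := by
    intro v w
    rw [fderiv_clm_apply hd (differentiableAt_const w)]
    simp
  show fderiv ℝ (fun y => fderiv ℝ f y (EuclideanSpace.single j 1)) x (EuclideanSpace.single i 1) = _
  rw [key]
  have r2 : pd j (fun y => fderiv ℝ f y (EuclideanSpace.single i 1)) x
      = fderiv ℝ (fderiv ℝ f) x (EuclideanSpace.single j 1) (EuclideanSpace.single i 1) := key _ _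
  show _ = pd j (fun y => fderiv ℝ f y (EuclideanSpace.single i 1)) x
  rw [r2]
  exact hsymm _ _

lemma pd_euler (hfC : ∀ n : ℕ, ContDiffAt ℝ n f x) (i : Fin m) :
    pd i (euler f) x = pd i f x + euler (pd i f) x := by
  have hd : ∀ j : Fin m, DifferentiableAt ℝ (fun y => y j * pd j f y) x := fun j =>
    (diff_proj j x).mul (diff_pd hfC j)
  have h1 : pd i (euler f) x = ∑ j, pd i (fun y => y j * pd j f y) x := pd_sum hd i
  rw [h1]
  have h2 : ∀ j ∈ Finset.univ, pd i (fun y => y j * pd j f y) x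
      = (if j = i then (1:ℝ) else 0) * pd j f x + x j * pd j (pd i f) x := by
    intro j _
    rw [pd_mul (diff_proj j x) (diff_pd hfC j), pd_proj, pd_symm hfC i j]
  rw [Finset.sum_congr rfl h2, Finset.sum_add_distrib]
  congr 1
  · simp

lemma sum_mul_self (x : EuclideanSpace ℝ (Fin m)) : ∑ i, x i * x i = ‖x‖ ^ (2:ℕ) := by
  rw [← real_inner_self_eq_norm_sq]
  simp [PiLp.inner_apply, RCLike.inner_apply, mul_comm, EuclideanSpace.real_norm_sq_eq, ← sq]

lemma euler_rpow_mul (s : ℝ) (hx : x ≠ 0) (hg : DifferentiableAt ℝ g x) :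
    euler (fun y => ‖y‖ ^ s * g y) x = s * ‖x‖ ^ s * g x + ‖x‖ ^ s * euler g x := by
  have hr : (0:ℝ) < ‖x‖ := norm_pos_iff.mpr hx
  have hstep : ∀ j ∈ Finset.univ, x j * pd j (fun y => ‖y‖ ^ s * g y) x
      = s * ‖x‖ ^ (s - 2) * g x * (x j * x j) + ‖x‖ ^ s * (x j * pd j g x) := by
    intro j _; rw [pd_rpow_mul s hx hg]; ring
  show (∑ j, x j * pd j (fun y => ‖y‖ ^ s * g y) x) = _
  rw [Finset.sum_congr rfl hstep, Finset.sum_add_distrib, ← Finset.mul_sum, ← Finset.mul_sum,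
    sum_mul_self]
  have h2 : ‖x‖ ^ (s - 2) * ‖x‖ ^ (2:ℕ) = ‖x‖ ^ s := by
    rw [← Real.rpow_natCast ‖x‖ 2, ← Real.rpow_add hr]
    congr 1; push_cast; ring
  have h3 : (∑ j, x j * pd j g x) = euler g x := rfl
  rw [h3]
  linear_combination (s * g x) * h2

lemma euler_proj_mul (j : Fin m) (hg : DifferentiableAt ℝ g x) :
    euler (fun y => y j * g y) x = x j * g x + x j * euler g x := by
  have hstep : ∀ k ∈ Finset.univ, x k * pd k (fun y => y j * g y) x
      = (if j = k then x k * g x else 0) + x j * (x k * pd k g x) := by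
    intro k _; rw [pd_proj_mul j hg]; split <;> ring
  show (∑ k, x k * pd k (fun y => y j * g y) x) = _
  rw [Finset.sum_congr rfl hstep, Finset.sum_add_distrib, Finset.sum_ite_eq, ← Finset.mul_sum,
    if_pos (Finset.mem_univ j)]
  rfl

lemma euler_add (hg : DifferentiableAt ℝ g x) (hh : DifferentiableAt ℝ h x) :
    euler (fun y => g y + h y) x = euler g x + euler h x := by
  have hstep : ∀ j ∈ Finset.univ, x j * pd j (fun y => g y + h y) x
      = x j * pd j g x + x j * pd j h x := by
    intro j _; rw [pd_add hg hh]; ring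
  show (∑ j, x j * pd j (fun y => g y + h y) x) = _
  rw [Finset.sum_congr rfl hstep, Finset.sum_add_distrib]
  rfl

lemma euler_const_mul (hg : DifferentiableAt ℝ g x) (k : ℝ) :
    euler (fun y => k * g y) x = k * euler g x := by
  have hstep : ∀ j ∈ Finset.univ, x j * pd j (fun y => k * g y) x
      = k * (x j * pd j g x) := by
    intro j _; rw [pd_const_mul hg]; ring
  show (∑ j, x j * pd j (fun y => k * g y) x) = _
  rw [Finset.sum_congr rfl hstep, ← Finset.mul_sum]
  rfl

lemma Dop_val (a b c : ℝ) (i : Fin m) (g : EuclideanSpace ℝ (Fin m) → ℝ)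
    (x : EuclideanSpace ℝ (Fin m)) :
    Dop a b c i g x = ‖x‖ ^ (1 - a / 2) * pd i g x + b * ‖x‖ ^ (-(a / 2) - 1) * x i * g x
      + c * ‖x‖ ^ (-(a / 2) - 1) * x i * euler g x := rfl

lemma Dop_eq (a b c : ℝ) (j : Fin m) (f : EuclideanSpace ℝ (Fin m) → ℝ) :
    Dop a b c j f = fun y => ‖y‖ ^ (1 - a / 2) * pd j f y
      + (b * (‖y‖ ^ (-(a / 2) - 1) * (y j * f y))
        + c * (‖y‖ ^ (-(a / 2) - 1) * (y j * euler f y))) := by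
  funext y; simp only [Dop]; ring

lemma pd_Dop (a b c : ℝ) (hfC : ∀ n : ℕ, ContDiffAt ℝ n f x) (hx : x ≠ 0) (i j : Fin m) :
    pd i (Dop a b c j f) x =
      (1 - a/2) * ‖x‖ ^ (1 - a/2 - 2) * x i * pd j f x
        + ‖x‖ ^ (1 - a/2) * pd i (pd j f) x
      + b * ((-(a/2) - 1) * ‖x‖ ^ (-(a/2) - 1 - 2) * x i * (x j * f x)
          + ‖x‖ ^ (-(a/2) - 1) * ((if j = i then (1:ℝ) else 0) * f x + x j * pd i f x))
      + c * ((-(a/2) - 1) * ‖x‖ ^ (-(a/2) - 1 - 2) * x i * (x j * euler f x)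
          + ‖x‖ ^ (-(a/2) - 1) * ((if j = i then (1:ℝ) else 0) * euler f x
              + x j * (pd i f x + euler (pd i f) x))) := by
  have hF := diff_f hfC
  have hPd := diff_pd hfC j
  have hE := diff_euler hfC
  have hjf : DifferentiableAt ℝ (fun y : EuclideanSpace ℝ (Fin m) => y j * f y) x :=
    (diff_proj j x).mul hF
  have hje : DifferentiableAt ℝ (fun y : EuclideanSpace ℝ (Fin m) => y j * euler f y) x :=
    (diff_proj j x).mul hE
  have hT1 : DifferentiableAt ℝ
      (fun y : EuclideanSpace ℝ (Fin m) => ‖y‖ ^ (1 - a/2) * pd j f y) x :=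
    (diff_rpow _ hx).mul hPd
  have hT2 : DifferentiableAt ℝ
      (fun y : EuclideanSpace ℝ (Fin m) => ‖y‖ ^ (-(a/2) - 1) * (y j * f y)) x :=
    (diff_rpow _ hx).mul hjf
  have hT3 : DifferentiableAt ℝ
      (fun y : EuclideanSpace ℝ (Fin m) => ‖y‖ ^ (-(a/2) - 1) * (y j * euler f y)) x :=
    (diff_rpow _ hx).mul hje
  rw [Dop_eq]
  rw [pd_add hT1 ((hT2.const_mul b).fun_add (hT3.const_mul c)),
    pd_add (hT2.const_mul b) (hT3.const_mul c),
    pd_const_mul hT2 b, pd_const_mul hT3 c,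
    pd_rpow_mul (1 - a/2) hx hPd, pd_rpow_mul (-(a/2) - 1) hx hjf,
    pd_rpow_mul (-(a/2) - 1) hx hje,
    pd_proj_mul j hF, pd_proj_mul j hE, pd_euler hfC]
  ring

lemma euler_Dop (a b c : ℝ) (hfC : ∀ n : ℕ, ContDiffAt ℝ n f x) (hx : x ≠ 0) (j : Fin m) :
    euler (Dop a b c j f) x =
      (1 - a/2) * ‖x‖ ^ (1 - a/2) * pd j f x + ‖x‖ ^ (1 - a/2) * euler (pd j f) x
      + b * ((-(a/2) - 1) * ‖x‖ ^ (-(a/2) - 1) * (x j * f x)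
          + ‖x‖ ^ (-(a/2) - 1) * (x j * f x + x j * euler f x))
      + c * ((-(a/2) - 1) * ‖x‖ ^ (-(a/2) - 1) * (x j * euler f x)
          + ‖x‖ ^ (-(a/2) - 1) * (x j * euler f x + x j * euler (euler f) x)) := by
  have hF := diff_f hfC
  have hPd := diff_pd hfC j
  have hE := diff_euler hfC
  have hjf : DifferentiableAt ℝ (fun y : EuclideanSpace ℝ (Fin m) => y j * f y) x :=
    (diff_proj j x).mul hF
  have hje : DifferentiableAt ℝ (fun y : EuclideanSpace ℝ (Fin m) => y j * euler f y) x :=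
    (diff_proj j x).mul hE
  have hT1 : DifferentiableAt ℝ
      (fun y : EuclideanSpace ℝ (Fin m) => ‖y‖ ^ (1 - a/2) * pd j f y) x :=
    (diff_rpow _ hx).mul hPd
  have hT2 : DifferentiableAt ℝ
      (fun y : EuclideanSpace ℝ (Fin m) => ‖y‖ ^ (-(a/2) - 1) * (y j * f y)) x :=
    (diff_rpow _ hx).mul hjf
  have hT3 : DifferentiableAt ℝ
      (fun y : EuclideanSpace ℝ (Fin m) => ‖y‖ ^ (-(a/2) - 1) * (y j * euler f y)) x :=
    (diff_rpow _ hx).mul hje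
  rw [Dop_eq]
  rw [euler_add hT1 ((hT2.const_mul b).fun_add (hT3.const_mul c)),
    euler_add (hT2.const_mul b) (hT3.const_mul c),
    euler_const_mul hT2 b, euler_const_mul hT3 c,
    euler_rpow_mul (1 - a/2) hx hPd, euler_rpow_mul (-(a/2) - 1) hx hjf,
    euler_rpow_mul (-(a/2) - 1) hx hje,
    euler_proj_mul j hF, euler_proj_mul j hE]
  ring

end Aux

theorem stmt_3 (m : ℕ) (hm : 1 ≤ m) (a b c : ℝ) (hc : c ≠ -1)
    (f : EuclideanSpace ℝ (Fin m) → ℝ)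
    (hf : ContDiffOn ℝ (⊤ : ℕ∞) f {(0 : EuclideanSpace ℝ (Fin m))}ᶜ) :
    (∀ (i j : Fin m) (x : EuclideanSpace ℝ (Fin m)), x ≠ 0 →
        Dop a b c i (Dop a b c j f) x - Dop a b c j (Dop a b c i f) x
          = ((1 - a / 2) + c * (1 - a / 2) - c) * ‖x‖ ^ (-a)
              * (x i * pd j f x - x j * pd i f x)) ∧
    (a ≠ 0 → c = 2 / a - 1 →
      ∀ (i j : Fin m) (x : EuclideanSpace ℝ (Fin m)), x ≠ 0 →
        Dop a b c i (Dop a b c j f) x = Dop a b c j (Dop a b c i f) x) := by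
  have key : ∀ (i j : Fin m) (x : EuclideanSpace ℝ (Fin m)), x ≠ 0 →
      Dop a b c i (Dop a b c j f) x - Dop a b c j (Dop a b c i f) x
        = ((1 - a / 2) + c * (1 - a / 2) - c) * ‖x‖ ^ (-a)
            * (x i * pd j f x - x j * pd i f x) := by
    intro i j x hx
    have hfC : ∀ n : ℕ, ContDiffAt ℝ n f x := fun n =>
      (hf.contDiffAt (isOpen_compl_singleton.mem_nhds
        (Set.mem_compl_singleton_iff.mpr hx))).of_le (by exact_mod_cast le_top)
    rcases eq_or_ne i j with rfl | hij
    · rw [sub_self]; ring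
    · have hr : (0:ℝ) < ‖x‖ := norm_pos_iff.mpr hx
      have hsym : pd j (pd i f) x = pd i (pd j f) x := pd_symm hfC j i
      rw [Dop_val a b c i (Dop a b c j f), Dop_val a b c j (Dop a b c i f),
        pd_Dop a b c hfC hx i j, pd_Dop a b c hfC hx j i,
        euler_Dop a b c hfC hx j, euler_Dop a b c hfC hx i,
        Dop_val a b c j f, Dop_val a b c i f, hsym]
      simp only [if_neg hij, if_neg (Ne.symm hij)]
      have hA : ‖x‖ ^ (1 - a/2) = ‖x‖ ^ (-(a/2) - 1) * ‖x‖ ^ (2:ℝ) := by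
        rw [← Real.rpow_add hr]; congr 1; ring
      have hB : ‖x‖ ^ (1 - a/2 - 2) = ‖x‖ ^ (-(a/2) - 1) := by congr 1; ring
      have hC2 : ‖x‖ ^ (-(a/2) - 1 - 2) = ‖x‖ ^ (-(a/2) - 1) / ‖x‖ ^ (2:ℝ) :=
        Real.rpow_sub hr _ _
      have hD : ‖x‖ ^ (-a) = ‖x‖ ^ (-(a/2) - 1) * ‖x‖ ^ (-(a/2) - 1) * ‖x‖ ^ (2:ℝ) := by
        rw [mul_assoc, ← Real.rpow_add hr, ← Real.rpow_add hr]; congr 1; ring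
      simp only [hA, hB, hC2, hD]
      have hu : (‖x‖ : ℝ) ^ (2:ℝ) ≠ 0 := (Real.rpow_pos_of_pos hr _).ne'
      field_simp
      ring
  refine ⟨key, fun ha hcv i j x hx => ?_⟩
  have h0 := key i j x hx
  have hco : ((1 - a / 2) + c * (1 - a / 2) - c) = 0 := by
    subst hcv; field_simp; ring
  rw [hco, zero_mul, zero_mul] at h0
  linarith [h0]
end

section
/- Assume a ≠ 0. For every smooth function f : ℝᵐ \ {0} → ℝ, every index i and every x ≠ 0 one has D_i( e^{−‖·‖^a / a} f )(x) = e^{−‖x‖^a / a} ( D_i f(x) − (1+c) ‖x‖^{a/2−1} x_i f(x) ). (Componentwise scalar form, for k = 0, of the gauging lemma e^{r^a/a} D e^{−r^a/a} = D − (1+c) x_a.) -/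
open Real

lemma aux_norm_rpow {m : ℕ} (a : ℝ) (x : EuclideanSpace ℝ (Fin m)) (hx : x ≠ 0) :
    HasFDerivAt (fun y : EuclideanSpace ℝ (Fin m) => ‖y‖ ^ a)
      ((a * ‖x‖ ^ (a - 2)) • innerSL ℝ x) x := by
  have hx0 : (0:ℝ) < ‖x‖ := norm_pos_iff.mpr hx
  have h1 : HasFDerivAt (fun y : EuclideanSpace ℝ (Fin m) => ‖y‖ ^ 2)
      ((2:ℕ) • innerSL ℝ x) x := (hasStrictFDerivAt_norm_sq x).hasFDerivAt
  have h2 : HasDerivAt (fun t : ℝ => t ^ (a/2)) ((a/2) * (‖x‖^2) ^ (a/2-1)) (‖x‖^2) :=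
    Real.hasDerivAt_rpow_const (Or.inl (by positivity))
  have h3 := h2.comp_hasFDerivAt x h1
  have heq : (fun y : EuclideanSpace ℝ (Fin m) => ((‖y‖:ℝ)^2) ^ (a/2)) = fun y => ‖y‖ ^ a := by
    funext y
    rw [← Real.rpow_natCast ‖y‖ 2, ← Real.rpow_mul (norm_nonneg y)]
    norm_num
    congr 1; ring
  simp only [Function.comp_def] at h3
  rw [heq] at h3
  refine h3.congr_fderiv ?_
  ext v
  simp only [ContinuousLinearMap.smul_apply, ContinuousLinearMap.coe_smul', Pi.smul_apply,
    smul_eq_mul]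
  have : ((‖x‖:ℝ)^2) ^ (a/2-1) = ‖x‖ ^ (a-2) := by
    rw [← Real.rpow_natCast ‖x‖ 2, ← Real.rpow_mul (norm_nonneg x)]
    congr 1; ring
  rw [this]
  ring

lemma aux_exp_fderiv {m : ℕ} (a : ℝ) (ha : a ≠ 0) (x : EuclideanSpace ℝ (Fin m)) (hx : x ≠ 0) :
    HasFDerivAt (fun y : EuclideanSpace ℝ (Fin m) => Real.exp (-‖y‖ ^ a / a))
      ((-(Real.exp (-‖x‖ ^ a / a)) * ‖x‖ ^ (a - 2)) • innerSL ℝ x) x := by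
  have h4 := aux_norm_rpow a x hx
  have h6 : HasFDerivAt (fun y : EuclideanSpace ℝ (Fin m) => -‖y‖ ^ a / a)
      ((-1/a) • ((a * ‖x‖ ^ (a-2)) • innerSL ℝ x)) x := by
    have := h4.const_mul (-1/a)
    exact this.congr_of_eventuallyEq (Filter.Eventually.of_forall fun y => by ring)
  have h5 : HasDerivAt Real.exp (Real.exp (-‖x‖ ^ a / a)) (-‖x‖ ^ a / a) := Real.hasDerivAt_exp _
  have h7 := h5.comp_hasFDerivAt x h6
  simp only [Function.comp_def] at h7
  refine h7.congr_fderiv ?_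
  ext v
  simp only [ContinuousLinearMap.smul_apply, smul_eq_mul]
  field_simp

theorem stmt_9 (m : ℕ) (hm : 1 ≤ m) (a b c : ℝ) (hc : c ≠ -1) (ha : a ≠ 0)
    (f : EuclideanSpace ℝ (Fin m) → ℝ)
    (hf : ContDiffOn ℝ (⊤ : ℕ∞) f {(0 : EuclideanSpace ℝ (Fin m))}ᶜ)
    (i : Fin m) (x : EuclideanSpace ℝ (Fin m)) (hx : x ≠ 0) :
    Dop a b c i (fun y => Real.exp (-‖y‖ ^ a / a) * f y) x
      = Real.exp (-‖x‖ ^ a / a)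
          * (Dop a b c i f x - (1 + c) * ‖x‖ ^ (a / 2 - 1) * x i * f x) := by
  have hx0 : (0:ℝ) < ‖x‖ := norm_pos_iff.mpr hx
  have hmem : {(0 : EuclideanSpace ℝ (Fin m))}ᶜ ∈ nhds x :=
    isOpen_compl_singleton.mem_nhds hx
  have hfd : DifferentiableAt ℝ f x :=
    ((hf.contDiffAt hmem).differentiableAt (by simp))
  have hG := aux_exp_fderiv a ha x hx
  have hprod : HasFDerivAt (fun y => Real.exp (-‖y‖ ^ a / a) * f y) _ x := hG.mul hfd.hasFDerivAt
  have hpd : ∀ j, pd j (fun y => Real.exp (-‖y‖ ^ a / a) * f y) x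
      = Real.exp (-‖x‖ ^ a / a) * pd j f x
        - Real.exp (-‖x‖ ^ a / a) * ‖x‖ ^ (a - 2) * x j * f x := by
    intro j
    rw [pd, hprod.fderiv]
    simp only [ContinuousLinearMap.add_apply, ContinuousLinearMap.coe_smul', Pi.smul_apply,
      ContinuousLinearMap.smul_apply, smul_eq_mul, innerSL_apply_apply]
    rw [show (inner ℝ x (EuclideanSpace.single j (1:ℝ)) : ℝ) = x j by
      rw [EuclideanSpace.inner_single_right]; simp]
    rw [pd]
    ring
  have hsum : ∑ j, x j * x j = ‖x‖ ^ 2 := by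
    rw [EuclideanSpace.norm_eq, Real.sq_sqrt (by positivity)]
    simp [sq]
  have hpow2 : ‖x‖ ^ (a - 2) * ‖x‖ ^ 2 = ‖x‖ ^ a := by
    rw [← Real.rpow_natCast ‖x‖ 2, ← Real.rpow_add hx0]
    norm_num
  have heuler : euler (fun y => Real.exp (-‖y‖ ^ a / a) * f y) x
      = Real.exp (-‖x‖ ^ a / a) * euler f x
        - Real.exp (-‖x‖ ^ a / a) * ‖x‖ ^ a * f x := by
    have step : euler (fun y => Real.exp (-‖y‖ ^ a / a) * f y) x
        = Real.exp (-‖x‖ ^ a / a) * euler f x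
          - Real.exp (-‖x‖ ^ a / a) * ‖x‖ ^ (a - 2) * (∑ j, x j * x j) * f x := by
      simp only [euler, hpd, mul_sub, Finset.sum_sub_distrib, Finset.mul_sum, Finset.sum_mul]
      congr 1
      · apply Finset.sum_congr rfl; intros; ring
      · apply Finset.sum_congr rfl; intros; ring
    rw [step, hsum]
    rw [show Real.exp (-‖x‖ ^ a / a) * ‖x‖ ^ (a - 2) * ‖x‖ ^ 2 * f x
        = Real.exp (-‖x‖ ^ a / a) * (‖x‖ ^ (a - 2) * ‖x‖ ^ 2) * f x by ring, hpow2]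
  have e1 : ‖x‖ ^ (1 - a/2) * ‖x‖ ^ (a - 2) = ‖x‖ ^ (a/2 - 1) := by
    rw [← Real.rpow_add hx0]; congr 1; ring
  have e2 : ‖x‖ ^ (-(a/2) - 1) * ‖x‖ ^ a = ‖x‖ ^ (a/2 - 1) := by
    rw [← Real.rpow_add hx0]; congr 1; ring
  rw [Dop, Dop, hpd i, heuler]
  linear_combination (-(Real.exp (-‖x‖ ^ a / a) * x i * f x)) * e1
    + (-(c * Real.exp (-‖x‖ ^ a / a) * x i * f x)) * e2
end
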